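/- Let H = H₀ ⊕ H₁ be a complex Hilbert space written as the orthogonal direct sum of two closed subspaces, let n ∈ {0,1}, and let J be a unitary operator on H with J(H_i) ⊆ H_{i+n mod 2} and J²x = (−1)^{(n+1)i} x for all x ∈ H_i. For a bounded operator T homogeneous of degree t ∈ {0,1}, define T† on x ∈ H_i by T†x = (−1)^{(n+1)(t+i)+ti} J T* J x (extended additively), where T* is the Hilbert adjoint. Then the superadjoint is a superinvolution: (a) T† is again homogeneous of degree t; (b) (T†)† = T; (c) for bounded homogeneous operators S of degree s and T of degree t, (S∘T)† = (−1)^{st} T† ∘ S†; (d) T ↦ T† is conjugate-linear. -/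

import Mathlib

/-!
On `H_i` the superadjoint is `J T* J` multiplied by the sign `superSign n t i`. As `J T* J` has
degree `n + t + n = t`, the Hilbert adjoint of `T†` is again of this form: `J* T J*` multiplied by
the sign at the shifted index. Since `J` is unitary, `(T†)† = T` then reduces to
`superSign n t i * superSign n t (i + n + t) = 1`. In `T† S†` the two inner factors `J` meet as
`J² = (-1)^{(n+1)k}`, and `(ST)† = (-1)^{st} T† S†` reduces to another sign identity; both are
finite checks over `Fin 2`. Existence of `T†` comes from the orthogonal projection onto
`H₀ = H₁ᗮ`.
-/

open ContinuousLinearMap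

noncomputable section

variable {H : Type*} [NormedAddCommGroup H] [InnerProductSpace ℂ H] [CompleteSpace H]

/-- `Td` is the superadjoint of the homogeneous operator `T` of degree `t` on the Hilbert
superspace `(H, J)` of parity `n`, graded by `Hsub`: on `x ∈ H_i`,
`T†x = (−1)^{(n+1)(t+i)+ti} J T* J x`, extended additively. -/
def IsSuperadjointOf (Hsub : Fin 2 → Submodule ℂ H) (n : Fin 2) (J : H →L[ℂ] H)
    (T : H →L[ℂ] H) (t : Fin 2) (Td : H →L[ℂ] H) : Prop :=
  ∀ i : Fin 2, ∀ x ∈ Hsub i,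
    Td x = ((-1 : ℂ)) ^ (((n : ℕ) + 1) * ((t : ℕ) + (i : ℕ)) + (t : ℕ) * (i : ℕ)) •
      J ((adjoint T) (J x))

section Grading

variable {𝕜 V : Type*} [RCLike 𝕜] [NormedAddCommGroup V] [InnerProductSpace 𝕜 V]

structure IsOrthogonalGrading (E : Fin 2 → Submodule 𝕜 V) : Prop where
  inner_eq_zero : ∀ x ∈ E 0, ∀ y ∈ E 1, inner 𝕜 x y = 0
  exists_add : ∀ x, ∃ x₀ ∈ E 0, ∃ x₁ ∈ E 1, x = x₀ + x₁

def IsHomogeneous (E : Fin 2 → Submodule 𝕜 V) (T : V →L[𝕜] V) (t : Fin 2) : Prop :=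
  ∀ i, ∀ x ∈ E i, T x ∈ E (i + t)

theorem IsHomogeneous.of_apply_eq_smul {E : Fin 2 → Submodule 𝕜 V} {A B : V →L[𝕜] V} {b : Fin 2}
    (hB : IsHomogeneous E B b) (c : Fin 2 → 𝕜) (hA : ∀ i, ∀ x ∈ E i, A x = c i • B x) :
    IsHomogeneous E A b := fun i x hx => hA i x hx ▸ Submodule.smul_mem _ _ (hB i x hx)

theorem IsHomogeneous.comp {E : Fin 2 → Submodule 𝕜 V} {S T : V →L[𝕜] V} {s t : Fin 2}
    (hS : IsHomogeneous E S s) (hT : IsHomogeneous E T t) : IsHomogeneous E (S ∘L T) (t + s) :=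
  fun i x hx => add_assoc i t s ▸ hS _ _ (hT i x hx)

namespace IsOrthogonalGrading

variable {E : Fin 2 → Submodule 𝕜 V}

theorem exists_mem_add_mem (hE : IsOrthogonalGrading E) (m : Fin 2) (x : V) :
    ∃ a ∈ E m, ∃ b ∈ E (m + 1), x = a + b := by
  obtain ⟨x₀, h₀, x₁, h₁, rfl⟩ := hE.exists_add x
  fin_cases m
  · exact ⟨x₀, h₀, x₁, h₁, rfl⟩
  · exact ⟨x₁, h₁, x₀, h₀, add_comm _ _⟩

theorem inner_eq_zero_of_ne (hE : IsOrthogonalGrading E) {i k : Fin 2} (hik : i ≠ k) {x y : V}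
    (hx : x ∈ E i) (hy : y ∈ E k) : inner 𝕜 x y = 0 := by
  fin_cases i <;> fin_cases k
  · exact absurd rfl hik
  · exact hE.inner_eq_zero x hx y hy
  · exact inner_eq_zero_symm.mp (hE.inner_eq_zero y hy x hx)
  · exact absurd rfl hik

theorem orthogonal_eq (hE : IsOrthogonalGrading E) (m : Fin 2) : (E (m + 1))ᗮ = E m := by
  have hle : E m ≤ (E (m + 1))ᗮ := fun x hx =>
    (Submodule.mem_orthogonal _ _).mpr fun y hy =>
      hE.inner_eq_zero_of_ne (by fin_cases m <;> decide) hy hx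
  refine le_antisymm (fun y hy => ?_) hle
  obtain ⟨a, ha, b, hb, rfl⟩ := hE.exists_mem_add_mem m y
  have hb' : b ∈ (E (m + 1))ᗮ := by
    simpa using Submodule.sub_mem _ hy (hle ha)
  rwa [Submodule.disjoint_def.mp (Submodule.orthogonal_disjoint _) b hb hb', add_zero]

theorem ext {W : Type*} [TopologicalSpace W] [AddCommMonoid W] [Module 𝕜 W]
    (hE : IsOrthogonalGrading E) {A B : V →L[𝕜] W} (h : ∀ i, ∀ x ∈ E i, A x = B x) : A = B := by
  ext x
  obtain ⟨x₀, h₀, x₁, h₁, rfl⟩ := hE.exists_add x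
  rw [map_add, map_add, h 0 x₀ h₀, h 1 x₁ h₁]

theorem ext_inner_right (hE : IsOrthogonalGrading E) {u w : V}
    (h : ∀ i, ∀ x ∈ E i, inner 𝕜 u x = inner 𝕜 w x) : u = w :=
  _root_.ext_inner_right 𝕜 fun v =>
    congrArg (· v) (hE.ext (A := innerSL 𝕜 u) (B := innerSL 𝕜 w) (by simpa using h))

theorem exists_apply_eq [CompleteSpace V] {W : Type*} [TopologicalSpace W] [AddCommGroup W]
    [Module 𝕜 W] [IsTopologicalAddGroup W] (hE : IsOrthogonalGrading E) (A : Fin 2 → V →L[𝕜] W) :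
    ∃ B : V →L[𝕜] W, ∀ i, ∀ x ∈ E i, B x = A i x := by
  have : CompleteSpace (E 0) := by
    rw [← hE.orthogonal_eq 0]
    exact (Submodule.isClosed_orthogonal _).completeSpace_coe
  set P := (E 0).starProjection
  refine ⟨A 0 ∘L P + A 1 ∘L (1 - P), Fin.forall_fin_two.mpr ⟨fun x hx => ?_, fun x hx => ?_⟩⟩
  · simp [P, Submodule.starProjection_eq_self_iff.mpr hx]
  · have : P x = 0 := (Submodule.starProjection_apply_eq_zero_iff _).mpr (hE.orthogonal_eq 1 ▸ hx)
    simp [this]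

theorem isHomogeneous_adjoint [CompleteSpace V] (hE : IsOrthogonalGrading E) {T : V →L[𝕜] V}
    {t : Fin 2} (hT : IsHomogeneous E T t) : IsHomogeneous E (adjoint T) t := by
  intro i y hy
  rw [← hE.orthogonal_eq]
  refine (Submodule.mem_orthogonal _ _).mpr fun u hu => ?_
  rw [adjoint_inner_right]
  exact hE.inner_eq_zero_of_ne (by fin_cases i <;> fin_cases t <;> decide) (hT _ u hu) hy

theorem isHomogeneous_comp_adjoint_comp [CompleteSpace V] (hE : IsOrthogonalGrading E)
    {J T : V →L[𝕜] V} {n t : Fin 2} (hJ : IsHomogeneous E J n) (hT : IsHomogeneous E T t) :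
    IsHomogeneous E (J ∘L adjoint T ∘L J) t := by
  have hidx : n + t + n = t := by fin_cases n <;> fin_cases t <;> rfl
  exact hidx ▸ hJ.comp ((hE.isHomogeneous_adjoint hT).comp hJ)

theorem adjoint_apply_of_apply_eq_smul [CompleteSpace V] (hE : IsOrthogonalGrading E)
    {A B : V →L[𝕜] V} {b : Fin 2} (hB : IsHomogeneous E B b) (c : Fin 2 → 𝕜)
    (hA : ∀ i, ∀ x ∈ E i, A x = c i • B x) {j : Fin 2} {y : V} (hy : y ∈ E j) :
    adjoint A y = starRingEnd 𝕜 (c (j + b)) • adjoint B y := by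
  have hBy : adjoint B y ∈ E (j + b) := hE.isHomogeneous_adjoint hB j y hy
  refine hE.ext_inner_right fun i x hx => ?_
  rw [adjoint_inner_left, hA i x hx, inner_smul_right, inner_smul_left, RCLike.conj_conj,
    ← adjoint_inner_left]
  -- `⟪B† y, x⟫` vanishes unless `i = j + b`, so `c i` may be replaced by `c (j + b)`.
  by_cases hi : i = j + b
  · rw [hi]
  · rw [hE.inner_eq_zero_of_ne (Ne.symm hi) hBy hx, mul_zero, mul_zero]

end IsOrthogonalGrading

theorem ContinuousLinearMap.comp_adjoint_eq_one_of_surjective {K : Type*} [NormedAddCommGroup K]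
    [InnerProductSpace 𝕜 K] [CompleteSpace V] [CompleteSpace K] {u : V →L[𝕜] K}
    (hu : ∀ x y : V, inner 𝕜 (u x) (u y) = inner 𝕜 x y) (hsurj : Function.Surjective u) :
    u ∘L adjoint u = 1 := by
  ext y
  obtain ⟨x, rfl⟩ := hsurj y
  rw [comp_apply, ← comp_apply (adjoint u), (inner_map_map_iff_adjoint_comp_self u).mp hu]
  rfl

end Grading

def superSign (n t i : Fin 2) : ℂ :=
  (-1) ^ (((n : ℕ) + 1) * ((t : ℕ) + (i : ℕ)) + (t : ℕ) * (i : ℕ))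

theorem conj_superSign (n t i : Fin 2) : starRingEnd ℂ (superSign n t i) = superSign n t i := by
  simp [superSign]

theorem superSign_mul_superSign (n t i : Fin 2) :
    superSign n t i * superSign n t (i + n + t) = 1 := by
  rw [superSign, superSign, ← pow_add]
  exact Even.neg_one_pow (by revert n t i; decide)

theorem superSign_add (n s t i : Fin 2) :
    superSign n (s + t) i = (-1) ^ ((s : ℕ) * (t : ℕ)) * (superSign n s i *
      superSign n t (i + s) * (-1) ^ (((n : ℕ) + 1) * ((i + n + s : Fin 2) : ℕ))) := by
  simp only [superSign, ← pow_add]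
  exact neg_one_pow_congr (by revert n s t i; decide)

theorem isSuperadjointOf_iff {E : Fin 2 → Submodule ℂ H} {n t : Fin 2} {J T Td : H →L[ℂ] H} :
    IsSuperadjointOf E n J T t Td ↔ ∀ i, ∀ x ∈ E i, Td x = superSign n t i • J (adjoint T (J x)) :=
  Iff.rfl

theorem exists_isSuperadjointOf {E : Fin 2 → Submodule ℂ H} (hE : IsOrthogonalGrading E)
    (n : Fin 2) (J T : H →L[ℂ] H) (t : Fin 2) : ∃ Td, IsSuperadjointOf E n J T t Td :=
  hE.exists_apply_eq fun i => superSign n t i • (J ∘L adjoint T ∘L J)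

namespace IsSuperadjointOf

variable {E : Fin 2 → Submodule ℂ H} {n t : Fin 2} {J T Td : H →L[ℂ] H}

theorem unique (hE : IsOrthogonalGrading E) {Td' : H →L[ℂ] H}
    (h : IsSuperadjointOf E n J T t Td) (h' : IsSuperadjointOf E n J T t Td') : Td = Td' :=
  hE.ext fun i x hx => (h i x hx).trans (h' i x hx).symm

theorem apply_eq (h : IsSuperadjointOf E n J T t Td) {i : Fin 2} {x : H} (hx : x ∈ E i) :
    Td x = superSign n t i • J (adjoint T (J x)) :=
  h i x hx

theorem isHomogeneous (hE : IsOrthogonalGrading E) (hJ : IsHomogeneous E J n)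
    (hT : IsHomogeneous E T t) (h : IsSuperadjointOf E n J T t Td) : IsHomogeneous E Td t :=
  (hE.isHomogeneous_comp_adjoint_comp hJ hT).of_apply_eq_smul (superSign n t) h

theorem adjoint_apply (hE : IsOrthogonalGrading E) (hJ : IsHomogeneous E J n)
    (hT : IsHomogeneous E T t) (h : IsSuperadjointOf E n J T t Td) {j : Fin 2} {y : H}
    (hy : y ∈ E j) : adjoint Td y = superSign n t (j + t) • adjoint J (T (adjoint J y)) := by
  rw [hE.adjoint_apply_of_apply_eq_smul (hE.isHomogeneous_comp_adjoint_comp hJ hT) (superSign n t)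
    h hy, conj_superSign, adjoint_comp, adjoint_comp, adjoint_adjoint]
  rfl

theorem symm (hE : IsOrthogonalGrading E) (hJ : IsHomogeneous E J n)
    (hJinner : ∀ x y : H, inner ℂ (J x) (J y) = inner ℂ x y) (hJsurj : Function.Surjective J)
    (hT : IsHomogeneous E T t) (h : IsSuperadjointOf E n J T t Td) :
    IsSuperadjointOf E n J Td t T := by
  have hJ'J : ∀ x, adjoint J (J x) = x :=
    ContinuousLinearMap.ext_iff.mp ((inner_map_map_iff_adjoint_comp_self J).mp hJinner)
  have hJJ' : ∀ y, J (adjoint J y) = y :=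
    ContinuousLinearMap.ext_iff.mp (comp_adjoint_eq_one_of_surjective hJinner hJsurj)
  refine isSuperadjointOf_iff.mpr fun i x hx => ?_
  rw [h.adjoint_apply hE hJ hT (hJ i x hx), hJ'J, map_smul, hJJ', smul_smul,
    superSign_mul_superSign, one_smul]

theorem comp (hE : IsOrthogonalGrading E) (hJ : IsHomogeneous E J n)
    (hJsq : ∀ i : Fin 2, ∀ x ∈ E i, J (J x) = ((-1 : ℂ)) ^ (((n : ℕ) + 1) * (i : ℕ)) • x)
    {s : Fin 2} {S Sd : H →L[ℂ] H} (hS : IsHomogeneous E S s)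
    (hSd : IsSuperadjointOf E n J S s Sd) (hTd : IsSuperadjointOf E n J T t Td) :
    IsSuperadjointOf E n J (S ∘L T) (s + t) (((-1 : ℂ)) ^ ((s : ℕ) * (t : ℕ)) • (Td ∘L Sd)) := by
  refine isSuperadjointOf_iff.mpr fun i x hx => ?_
  have hSx : adjoint S (J x) ∈ E (i + n + s) := hE.isHomogeneous_adjoint hS _ _ (hJ i x hx)
  have hJSx : J (adjoint S (J x)) ∈ E (i + s) := by
    have hidx : i + n + s + n = i + s := by fin_cases i <;> fin_cases n <;> fin_cases s <;> rfl
    exact hidx ▸ hJ _ _ hSx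
  rw [smul_apply, comp_apply, hSd.apply_eq hx, map_smul, hTd.apply_eq hJSx, hJsq _ _ hSx,
    adjoint_comp, comp_apply]
  simp only [map_smul, smul_smul, superSign_add]
  congr 1
  ring

theorem smul (h : IsSuperadjointOf E n J T t Td) (c : ℂ) :
    IsSuperadjointOf E n J (c • T) t (starRingEnd ℂ c • Td) := by
  refine isSuperadjointOf_iff.mpr fun i x hx => ?_
  rw [smul_apply, h.apply_eq hx, adjoint.map_smulₛₗ, smul_apply, map_smul, smul_smul, smul_smul,
    mul_comm]

theorem add {T' Td' : H →L[ℂ] H} (h : IsSuperadjointOf E n J T t Td)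
    (h' : IsSuperadjointOf E n J T' t Td') : IsSuperadjointOf E n J (T + T') t (Td + Td') := by
  refine isSuperadjointOf_iff.mpr fun i x hx => ?_
  rw [add_apply, h.apply_eq hx, h'.apply_eq hx, map_add, add_apply, map_add, smul_add]

end IsSuperadjointOf

theorem superadjoint_superinvolution_general
    (Hsub : Fin 2 → Submodule ℂ H)
    (horth : ∀ x ∈ Hsub 0, ∀ y ∈ Hsub 1, (inner ℂ x y : ℂ) = 0)
    (hspan : ∀ x : H, ∃ x₀ ∈ Hsub 0, ∃ x₁ ∈ Hsub 1, x = x₀ + x₁)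
    (n : Fin 2) (J : H →L[ℂ] H)
    (hJinner : ∀ x y : H, (inner ℂ (J x) (J y) : ℂ) = inner ℂ x y)
    (hJsurj : Function.Surjective J)
    (hJgrade : ∀ i : Fin 2, ∀ x ∈ Hsub i, J x ∈ Hsub (i + n))
    (hJsq : ∀ i : Fin 2, ∀ x ∈ Hsub i,
      J (J x) = ((-1 : ℂ)) ^ (((n : ℕ) + 1) * (i : ℕ)) • x)
    (T : H →L[ℂ] H) (t : Fin 2)
    (hT : ∀ i : Fin 2, ∀ x ∈ Hsub i, T x ∈ Hsub (i + t)) :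
    (∃! Td : H →L[ℂ] H, IsSuperadjointOf Hsub n J T t Td) ∧
    ∀ Td : H →L[ℂ] H, IsSuperadjointOf Hsub n J T t Td →
      -- (a) `T†` is homogeneous of degree `t`
      (∀ i : Fin 2, ∀ x ∈ Hsub i, Td x ∈ Hsub (i + t)) ∧
      -- (b) `(T†)† = T`
      (∀ Tdd : H →L[ℂ] H, IsSuperadjointOf Hsub n J Td t Tdd → Tdd = T) ∧
      -- (c) `(S∘T)† = (−1)^{st} T† ∘ S†`
      (∀ (s : Fin 2) (S : H →L[ℂ] H), (∀ i : Fin 2, ∀ x ∈ Hsub i, S x ∈ Hsub (i + s)) →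
        ∀ Sd : H →L[ℂ] H, IsSuperadjointOf Hsub n J S s Sd →
        ∀ STd : H →L[ℂ] H, IsSuperadjointOf Hsub n J (S ∘L T) (s + t) STd →
          STd = ((-1 : ℂ)) ^ ((s : ℕ) * (t : ℕ)) • (Td ∘L Sd)) ∧
      -- (d) conjugate-linearity of `T ↦ T†`
      (∀ (c : ℂ) (cTd : H →L[ℂ] H), IsSuperadjointOf Hsub n J (c • T) t cTd →
        cTd = (starRingEnd ℂ c) • Td) ∧
      (∀ T' Td' : H →L[ℂ] H, (∀ i : Fin 2, ∀ x ∈ Hsub i, T' x ∈ Hsub (i + t)) →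
        IsSuperadjointOf Hsub n J T' t Td' →
        ∀ Sd : H →L[ℂ] H, IsSuperadjointOf Hsub n J (T + T') t Sd →
          Sd = Td + Td') := by
  have hE : IsOrthogonalGrading Hsub := ⟨horth, hspan⟩
  obtain ⟨Td₀, hTd₀⟩ := exists_isSuperadjointOf hE n J T t
  refine ⟨⟨Td₀, hTd₀, fun Td hTd => hTd.unique hE hTd₀⟩, fun Td hTd => ⟨?_, ?_, ?_, ?_, ?_⟩⟩
  · exact hTd.isHomogeneous hE hJgrade hT
  · exact fun Tdd hTdd => hTdd.unique hE (hTd.symm hE hJgrade hJinner hJsurj hT)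
  · exact fun s S hS Sd hSd STd hSTd => hSTd.unique hE (hSd.comp hE hJgrade hJsq hS hTd)
  · exact fun c cTd hcTd => hcTd.unique hE (hTd.smul c)
  · exact fun T' Td' _ hTd' Sd hSd => hSd.unique hE (hTd.add hTd')

/-- On a Hilbert superspace `(H = H₀ ⊕ H₁, J)` of parity `n`, every bounded
homogeneous operator `T` of degree `t` has a unique superadjoint `T†`, and the superadjoint is
a superinvolution: (a) `T†` is homogeneous of degree `t`; (b) `(T†)† = T`;
(c) `(S∘T)† = (−1)^{st} T†∘S†`; (d) `T ↦ T†` is conjugate-linear. -/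
theorem superadjoint_superinvolution
    (Hsub : Fin 2 → Submodule ℂ H)
    (hclosed : ∀ i, IsClosed (Hsub i : Set H))
    (horth : ∀ x ∈ Hsub 0, ∀ y ∈ Hsub 1, (inner ℂ x y : ℂ) = 0)
    (hspan : ∀ x : H, ∃ x₀ ∈ Hsub 0, ∃ x₁ ∈ Hsub 1, x = x₀ + x₁)
    (n : Fin 2) (J : H →L[ℂ] H)
    (hJinner : ∀ x y : H, (inner ℂ (J x) (J y) : ℂ) = inner ℂ x y)
    (hJsurj : Function.Surjective J)
    (hJgrade : ∀ i : Fin 2, ∀ x ∈ Hsub i, J x ∈ Hsub (i + n))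
    (hJsq : ∀ i : Fin 2, ∀ x ∈ Hsub i,
      J (J x) = ((-1 : ℂ)) ^ (((n : ℕ) + 1) * (i : ℕ)) • x)
    (T : H →L[ℂ] H) (t : Fin 2)
    (hT : ∀ i : Fin 2, ∀ x ∈ Hsub i, T x ∈ Hsub (i + t)) :
    (∃! Td : H →L[ℂ] H, IsSuperadjointOf Hsub n J T t Td) ∧
    ∀ Td : H →L[ℂ] H, IsSuperadjointOf Hsub n J T t Td →
      -- (a) `T†` is homogeneous of degree `t`
      (∀ i : Fin 2, ∀ x ∈ Hsub i, Td x ∈ Hsub (i + t)) ∧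
      -- (b) `(T†)† = T`
      (∀ Tdd : H →L[ℂ] H, IsSuperadjointOf Hsub n J Td t Tdd → Tdd = T) ∧
      -- (c) `(S∘T)† = (−1)^{st} T† ∘ S†`
      (∀ (s : Fin 2) (S : H →L[ℂ] H), (∀ i : Fin 2, ∀ x ∈ Hsub i, S x ∈ Hsub (i + s)) →
        ∀ Sd : H →L[ℂ] H, IsSuperadjointOf Hsub n J S s Sd →
        ∀ STd : H →L[ℂ] H, IsSuperadjointOf Hsub n J (S ∘L T) (s + t) STd →
          STd = ((-1 : ℂ)) ^ ((s : ℕ) * (t : ℕ)) • (Td ∘L Sd)) ∧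
      -- (d) conjugate-linearity of `T ↦ T†`
      (∀ (c : ℂ) (cTd : H →L[ℂ] H), IsSuperadjointOf Hsub n J (c • T) t cTd →
        cTd = (starRingEnd ℂ c) • Td) ∧
      (∀ T' Td' : H →L[ℂ] H, (∀ i : Fin 2, ∀ x ∈ Hsub i, T' x ∈ Hsub (i + t)) →
        IsSuperadjointOf Hsub n J T' t Td' →
        ∀ Sd : H →L[ℂ] H, IsSuperadjointOf Hsub n J (T + T') t Sd →
          Sd = Td + Td') :=
  superadjoint_superinvolution_general Hsub horth hspan n J hJinner hJsurj hJgrade hJsq T t hT
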